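/- arXiv:1212.1545 — 3 statements merged into one kernel-verified Lean document; each statement's English description precedes it below -/
import Mathlib

section
/- Let 𝒜 be an abelian category. Suppose given objects x, y, q, x', y', q' and morphisms λ : x → y, ξ : y → q, χ : x → x', ε : y → y', μ : x' → y', ζ : y' → q', φ : q → q' such that ε ∘ λ = μ ∘ χ, φ ∘ ξ = ζ ∘ ε, ξ is a cokernel of λ, and ζ is a cokernel of μ. Let p : y ⊞ x' → y' be the morphism with components ε and μ (i.e. p(u,v) = ε(u) + μ(v)), and let k → y ⊞ x' be its kernel. Let P : y ⊞ x' ⊞ x → y ⊞ y' be the morphism sending (u,v,w) to (u + λ(w), ε(u) + μ(v)), and let k' → y ⊞ x' ⊞ x be its kernel. The projection y ⊞ x' ⊞ x → y ⊞ x' onto the first two summands carries k' into k, inducing a morphism ρ : k' → k. Moreover, the composite k → y ⊞ x' → y →^ξ q factors through the kernel of φ and vanishes after precomposition with ρ. Then the induced morphism coker(ρ) → ker(φ) is an isomorphism. -/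
/-!
Let `θ : k ⟶ ker φ` be the induced map. It suffices that `θ` is epi and that `k' ⟶ k ⟶ ker φ`
is exact, for then `θ` is a cokernel of `ρ`; both are checked on elements up to refinement.
An element of `ker φ` lifts along the epi `ξ` to some `u : y`; since `ζ (ε u) = φ (ξ u) = 0`,
exactness of the bottom row gives `ε u = μ v`, and `(u, -v) ∈ k` maps to it.
An element `(u, v) ∈ k` with `ξ u = 0` has `u = λ w` by exactness of the top row,
and `(u, v, -w) ∈ k'` maps to it under `ρ`.
-/

open CategoryTheory Limits

universe v u

namespace CategoryTheory

variable {𝒜 : Type*} [Category 𝒜] [Abelian 𝒜]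

lemma ShortComplex.Exact.isIso_cokernel_desc {S : ShortComplex 𝒜} (hS : S.Exact) [Epi S.g] :
    IsIso (cokernel.desc S.f S.g S.zero) :=
  (IsColimit.coconePointUniqueUpToIso (cokernelIsCokernel S.f) hS.gIsCokernel).isIso_hom

lemma Limits.biprod.comp_fst_comp_eq_neg_of_comp_desc_eq_zero {T X Y Z : 𝒜} {t : T ⟶ X ⊞ Y}
    {f : X ⟶ Z} {g : Y ⟶ Z} (h : t ≫ biprod.desc f g = 0) :
    t ≫ biprod.fst ≫ f = -(t ≫ biprod.snd ≫ g) := by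
  rw [biprod.desc_eq, Preadditive.comp_add] at h
  exact eq_neg_of_add_eq_zero_left h

lemma Limits.kernel.ι_comp_left_eq_zero_of_biprod_lift {W X Y : 𝒜} (f : W ⟶ X) (g : W ⟶ Y) :
    kernel.ι (biprod.lift f g) ≫ f = 0 := by
  simpa only [Category.assoc, biprod.lift_fst, zero_comp] using
    kernel.condition (biprod.lift f g) =≫ biprod.fst

lemma Limits.kernel.ι_comp_right_eq_zero_of_biprod_lift {W X Y : 𝒜} (f : W ⟶ X) (g : W ⟶ Y) :
    kernel.ι (biprod.lift f g) ≫ g = 0 := by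
  simpa only [Category.assoc, biprod.lift_snd, zero_comp] using
    kernel.condition (biprod.lift f g) =≫ biprod.snd

namespace Freyd

variable {x y q x' y' q' : 𝒜} (l : x ⟶ y) (ξ : y ⟶ q) (ε : y ⟶ y') (μ : x' ⟶ y') (ζ : y' ⟶ q')
  (φ : q ⟶ q')

lemma kernel_ι_comp_fst_comp_fst_comp_eq_zero (wξ : l ≫ ξ = 0) :
    kernel.ι (biprod.lift (biprod.desc biprod.fst l) (biprod.fst ≫ biprod.desc ε μ)) ≫
      biprod.fst ≫ biprod.fst ≫ ξ = 0 := by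
  have h := biprod.comp_fst_comp_eq_neg_of_comp_desc_eq_zero
    (kernel.ι_comp_left_eq_zero_of_biprod_lift (biprod.desc biprod.fst l)
      (biprod.fst ≫ biprod.desc ε μ))
  rw [reassoc_of% h]
  simp [wξ]

lemma kernel_ι_comp_fst_comp_eq_zero (sq₂ : ξ ≫ φ = ε ≫ ζ) (wζ : μ ≫ ζ = 0) :
    (kernel.ι (biprod.desc ε μ) ≫ biprod.fst ≫ ξ) ≫ φ = 0 := by
  have h := biprod.comp_fst_comp_eq_neg_of_comp_desc_eq_zero (kernel.condition (biprod.desc ε μ))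
  calc (kernel.ι (biprod.desc ε μ) ≫ biprod.fst ≫ ξ) ≫ φ
      = (kernel.ι (biprod.desc ε μ) ≫ biprod.fst ≫ ε) ≫ ζ := by simp [sq₂]
    _ = 0 := by simp [h, wζ]

lemma kernel_lift_comp_kernel_lift_eq_zero (wξ : l ≫ ξ = 0)
    (h₁ : (kernel.ι (biprod.lift (biprod.desc biprod.fst l) (biprod.fst ≫ biprod.desc ε μ)) ≫
      biprod.fst) ≫ biprod.desc ε μ = 0)
    (h₂ : (kernel.ι (biprod.desc ε μ) ≫ biprod.fst ≫ ξ) ≫ φ = 0) :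
    kernel.lift (biprod.desc ε μ)
        (kernel.ι (biprod.lift (biprod.desc biprod.fst l) (biprod.fst ≫ biprod.desc ε μ)) ≫
          biprod.fst) h₁ ≫
      kernel.lift φ (kernel.ι (biprod.desc ε μ) ≫ biprod.fst ≫ ξ) h₂ = 0 := by
  ext
  simpa using kernel_ι_comp_fst_comp_fst_comp_eq_zero l ξ ε μ wξ

lemma epi_kernel_lift (wζ : μ ≫ ζ = 0) (sq₂ : ξ ≫ φ = ε ≫ ζ)
    (hζ : (ShortComplex.mk μ ζ wζ).Exact) [Epi ξ]
    (h₂ : (kernel.ι (biprod.desc ε μ) ≫ biprod.fst ≫ ξ) ≫ φ = 0) :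
    Epi (kernel.lift φ (kernel.ι (biprod.desc ε μ) ≫ biprod.fst ≫ ξ) h₂) := by
  rw [epi_iff_surjective_up_to_refinements]
  intro A t
  obtain ⟨A₁, π₁, _, u, hu⟩ := surjective_up_to_refinements_of_epi ξ (t ≫ kernel.ι φ)
  have huζ : (u ≫ ε) ≫ ζ = 0 := by
    simp [← sq₂, ← reassoc_of% hu]
  obtain ⟨A₂, π₂, _, v, hv⟩ := hζ.exact_up_to_refinements (u ≫ ε) huζ
  have hk : biprod.lift (π₂ ≫ u) (-v) ≫ biprod.desc ε μ = 0 := by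
    simp [hv]
  refine ⟨A₂, π₂ ≫ π₁, inferInstance, kernel.lift _ _ hk, ?_⟩
  ext
  simp [hu]

lemma exact_kernel_lift (wξ : l ≫ ξ = 0) (hξ : (ShortComplex.mk l ξ wξ).Exact)
    (h₁ : (kernel.ι (biprod.lift (biprod.desc biprod.fst l) (biprod.fst ≫ biprod.desc ε μ)) ≫
      biprod.fst) ≫ biprod.desc ε μ = 0)
    (h₂ : (kernel.ι (biprod.desc ε μ) ≫ biprod.fst ≫ ξ) ≫ φ = 0) :
    (ShortComplex.mk _ _ (kernel_lift_comp_kernel_lift_eq_zero l ξ ε μ φ wξ h₁ h₂)).Exact := by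
  rw [ShortComplex.exact_iff_exact_up_to_refinements]
  intro A a ha
  have haξ : (a ≫ kernel.ι (biprod.desc ε μ) ≫ biprod.fst) ≫ ξ = 0 := by
    simpa using ha =≫ kernel.ι φ
  obtain ⟨A', π, _, w, hw⟩ := hξ.exact_up_to_refinements _ haξ
  have hk : biprod.lift (π ≫ a ≫ kernel.ι (biprod.desc ε μ)) (-w) ≫
      biprod.lift (biprod.desc biprod.fst l) (biprod.fst ≫ biprod.desc ε μ) = 0 := by
    ext <;> simp [hw]
  refine ⟨A', π, inferInstance, kernel.lift _ _ hk, ?_⟩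
  rw [← cancel_mono (kernel.ι _)]
  simp

end Freyd

end CategoryTheory

open CategoryTheory.Freyd in
theorem freyd_cokernel_kernel_iso_general {𝒜 : Type u} [Category.{v} 𝒜] [Abelian 𝒜]
    {x y q x' y' q' : 𝒜}
    (l : x ⟶ y) (ξ : y ⟶ q) (ε : y ⟶ y') (μ : x' ⟶ y') (ζ : y' ⟶ q')
    (φ : q ⟶ q')
    (sq₂ : ξ ≫ φ = ε ≫ ζ)
    (wξ : l ≫ ξ = 0) (hξ : Nonempty (IsColimit (CokernelCofork.ofπ ξ wξ)))
    (wζ : μ ≫ ζ = 0) (hζ : Nonempty (IsColimit (CokernelCofork.ofπ ζ wζ))) :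
    ∃ (h₁ : (kernel.ι (biprod.lift (biprod.desc biprod.fst l)
            (biprod.fst ≫ biprod.desc ε μ)) ≫ biprod.fst) ≫ biprod.desc ε μ = 0)
      (h₂ : (kernel.ι (biprod.desc ε μ) ≫ biprod.fst ≫ ξ) ≫ φ = 0)
      (h₃ : kernel.lift (biprod.desc ε μ)
              (kernel.ι (biprod.lift (biprod.desc biprod.fst l)
                (biprod.fst ≫ biprod.desc ε μ)) ≫ biprod.fst) h₁ ≫
            kernel.lift φ (kernel.ι (biprod.desc ε μ) ≫ biprod.fst ≫ ξ) h₂ = 0),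
      IsIso (cokernel.desc
        (kernel.lift (biprod.desc ε μ)
          (kernel.ι (biprod.lift (biprod.desc biprod.fst l)
            (biprod.fst ≫ biprod.desc ε μ)) ≫ biprod.fst) h₁)
        (kernel.lift φ (kernel.ι (biprod.desc ε μ) ≫ biprod.fst ≫ ξ) h₂) h₃) := by
  have h₁ := (Category.assoc _ _ _).trans
    (kernel.ι_comp_right_eq_zero_of_biprod_lift (biprod.desc biprod.fst l)
      (biprod.fst ≫ biprod.desc ε μ))
  have h₂ := kernel_ι_comp_fst_comp_eq_zero ξ ε μ ζ φ sq₂ wζ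
  have : Epi ξ := by simpa using epi_of_isColimit_cofork hξ.some
  have := epi_kernel_lift ξ ε μ ζ φ wζ sq₂ (ShortComplex.exact_of_g_is_cokernel _ hζ.some) h₂
  exact ⟨h₁, h₂, _,
    (exact_kernel_lift l ξ ε μ φ wξ (ShortComplex.exact_of_g_is_cokernel _ hξ.some) h₁ h₂)
      |>.isIso_cokernel_desc⟩

/-- Freyd's lemma: in an abelian category, given an exact two-row diagram
`x → y → q → 0`, `x' → y' → q' → 0` with compatible vertical maps
`χ : x ⟶ x'`, `ε : y ⟶ y'`, `φ : q ⟶ q'`, form `p = (ε, μ) : y ⊞ x' ⟶ y'` with kernel `k`,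
and `P : (y ⊞ x') ⊞ x ⟶ y ⊞ y'`, `(u,v,w) ↦ (u + λ w, ε u + μ v)`, with kernel `k'`.
The projection onto the first two summands induces `ρ : k' ⟶ k`, the composite
`k ⟶ y ⊞ x' ⟶ y ⟶ q` factors through `ker φ` and vanishes after precomposition with `ρ`,
and the induced morphism `coker ρ ⟶ ker φ` is an isomorphism. -/
theorem freyd_cokernel_kernel_iso {𝒜 : Type u} [Category.{v} 𝒜] [Abelian 𝒜]
    {x y q x' y' q' : 𝒜}
    (l : x ⟶ y) (ξ : y ⟶ q) (χ : x ⟶ x') (ε : y ⟶ y') (μ : x' ⟶ y') (ζ : y' ⟶ q')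
    (φ : q ⟶ q')
    (sq₁ : l ≫ ε = χ ≫ μ) (sq₂ : ξ ≫ φ = ε ≫ ζ)
    (wξ : l ≫ ξ = 0) (hξ : Nonempty (IsColimit (CokernelCofork.ofπ ξ wξ)))
    (wζ : μ ≫ ζ = 0) (hζ : Nonempty (IsColimit (CokernelCofork.ofπ ζ wζ))) :
    ∃ (h₁ : (kernel.ι (biprod.lift (biprod.desc biprod.fst l)
            (biprod.fst ≫ biprod.desc ε μ)) ≫ biprod.fst) ≫ biprod.desc ε μ = 0)
      (h₂ : (kernel.ι (biprod.desc ε μ) ≫ biprod.fst ≫ ξ) ≫ φ = 0)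
      (h₃ : kernel.lift (biprod.desc ε μ)
              (kernel.ι (biprod.lift (biprod.desc biprod.fst l)
                (biprod.fst ≫ biprod.desc ε μ)) ≫ biprod.fst) h₁ ≫
            kernel.lift φ (kernel.ι (biprod.desc ε μ) ≫ biprod.fst ≫ ξ) h₂ = 0),
      IsIso (cokernel.desc
        (kernel.lift (biprod.desc ε μ)
          (kernel.ι (biprod.lift (biprod.desc biprod.fst l)
            (biprod.fst ≫ biprod.desc ε μ)) ≫ biprod.fst) h₁)
        (kernel.lift φ (kernel.ι (biprod.desc ε μ) ≫ biprod.fst ≫ ξ) h₂) h₃) :=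
  freyd_cokernel_kernel_iso_general l ξ ε μ ζ φ sq₂ wξ hξ wζ hζ
end

section
/- Let k be a field and let A ⊆ k^ℕ be the k-subalgebra of eventually constant sequences. Then the power series ring A[[x]] is not a coherent ring: there exists a finitely generated ideal of A[[x]] that is not finitely presented as an A[[x]]-module. -/
/-!
Let `a = ∑ₙ δ_{2n} xⁿ ∈ A[[x]]`, where `δ_i ∈ A` is the indicator sequence of `i`. As
`Ideal.span {a} ≅ A[[x]] ⧸ ann a`, a finite presentation of it would make `ann a` finitely
generated. Evaluation at the coordinate `2n` sends `a` to `xⁿ`, a non-zero-divisor of `k[[x]]`, so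
the constant coefficient of every annihilator of `a` vanishes at all even coordinates, hence, being
eventually constant, at all large coordinates. Finitely many generators of `ann a` therefore all
vanish beyond some `N`, yet `δ_j` annihilates `a` for every odd `j`.
-/

universe u

/-- The `k`-subalgebra of the product algebra `k ^ ℕ` consisting of the eventually
constant (stationary) sequences. -/
def stationarySubalgebra (k : Type u) [Field k] : Subalgebra k (ℕ → k) where
  carrier := {f | ∃ N c, ∀ n, N ≤ n → f n = c}
  mul_mem' := by
    rintro f g ⟨N, c, hf⟩ ⟨M, d, hg⟩
    exact ⟨max N M, c * d, fun n hn => by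
      rw [Pi.mul_apply, hf n (le_trans (le_max_left _ _) hn),
        hg n (le_trans (le_max_right _ _) hn)]⟩
  add_mem' := by
    rintro f g ⟨N, c, hf⟩ ⟨M, d, hg⟩
    exact ⟨max N M, c + d, fun n hn => by
      rw [Pi.add_apply, hf n (le_trans (le_max_left _ _) hn),
        hg n (le_trans (le_max_right _ _) hn)]⟩
  algebraMap_mem' := fun r => ⟨0, r, fun n _ => rfl⟩
  one_mem' := ⟨0, 1, fun n _ => rfl⟩
  zero_mem' := ⟨0, 0, fun n _ => rfl⟩

open Filter PowerSeries

theorem Submodule.fg_annihilator_of_finitePresentation_span_singleton {R M : Type*} [CommRing R]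
    [AddCommGroup M] [Module R M] {x : M} (hx : Module.FinitePresentation R (R ∙ x)) :
    (R ∙ x).annihilator.FG := by
  let l := LinearMap.toSpanSingleton R (R ∙ x) ⟨x, Submodule.mem_span_singleton_self x⟩
  have hl : Function.Surjective l := by
    rintro ⟨y, hy⟩
    obtain ⟨r, rfl⟩ := Submodule.mem_span_singleton.mp hy
    exact ⟨r, rfl⟩
  have hker : (R ∙ x).annihilator = LinearMap.ker l := by
    ext r
    simp [l, Subtype.ext_iff]
  exact hker ▸ Module.FinitePresentation.fg_ker l hl

theorem Submodule.FG.eventually_le {R M ι : Type*} [Semiring R] [AddCommMonoid M] [Module R M]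
    {N : Submodule R M} (hN : N.FG) {l : Filter ι} {P : ι → Submodule R M}
    (hP : ∀ m ∈ N, ∀ᶠ i in l, m ∈ P i) : ∀ᶠ i in l, N ≤ P i := by
  obtain ⟨s, rfl⟩ := hN
  simp_rw [Submodule.span_le, Set.subset_def, Finset.mem_coe]
  exact (eventually_all_finset s).2 fun m hm => hP m (Submodule.subset_span hm)

namespace stationarySubalgebra

variable {k : Type u} [Field k]

theorem eventually_eq_zero_of_frequently (z : stationarySubalgebra k)
    (hz : ∃ᶠ n in atTop, (z : ℕ → k) n = 0) : ∀ᶠ n in atTop, (z : ℕ → k) n = 0 := by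
  obtain ⟨N, c, hc⟩ := z.2
  have hc' : ∀ᶠ n in atTop, (z : ℕ → k) n = c := eventually_atTop.mpr ⟨N, hc⟩
  obtain ⟨n, hn0, hnc⟩ := (hz.and_eventually hc').exists
  exact hc'.mono fun m hm => hm.trans (hnc.symm.trans hn0)

variable (k)

def eval (j : ℕ) : stationarySubalgebra k →+* k :=
  (Pi.evalRingHom (fun _ => k) j).comp (stationarySubalgebra k).val.toRingHom

def single (i : ℕ) : stationarySubalgebra k :=
  ⟨Pi.single i 1, i + 1, 0, fun n hn => Pi.single_eq_of_ne (show n ≠ i by omega) _⟩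

def soublinSeries : PowerSeries (stationarySubalgebra k) :=
  mk fun n => single k (2 * n)

variable {k}

@[simp] theorem eval_apply (j : ℕ) (z : stationarySubalgebra k) :
    eval k j z = (z : ℕ → k) j :=
  rfl

@[simp] theorem coe_single (i : ℕ) : (single k i : ℕ → k) = Pi.single i 1 :=
  rfl

theorem map_eval_soublinSeries (n : ℕ) : map (eval k (2 * n)) (soublinSeries k) = X ^ n := by
  ext m
  simp [soublinSeries, coeff_X_pow, Pi.single_apply, eq_comm]

theorem C_single_mul_soublinSeries {j : ℕ} (hj : Odd j) :
    C (single k j) * soublinSeries k = 0 := by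
  obtain ⟨m, rfl⟩ := hj
  ext n i
  simp only [soublinSeries, coeff_C_mul, coeff_mk, map_zero, Subalgebra.coe_mul, coe_single,
    Pi.mul_apply, Pi.single_apply, ZeroMemClass.coe_zero, Pi.zero_apply, mul_ite, mul_one, mul_zero]
  split_ifs <;> first | rfl | omega

theorem eventually_eval_constantCoeff_eq_zero {c : PowerSeries (stationarySubalgebra k)}
    (hc : c * soublinSeries k = 0) : ∀ᶠ j in atTop, eval k j (constantCoeff c) = 0 := by
  refine eventually_eq_zero_of_frequently _ (frequently_atTop.2 fun N => ⟨2 * N, by omega, ?_⟩)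
  have h := congrArg (PowerSeries.map (eval k (2 * N))) hc
  rw [map_mul, map_eval_soublinSeries, map_zero] at h
  have h0 : map (eval k (2 * N)) c = 0 :=
    (mul_eq_zero.1 h).resolve_right (pow_ne_zero _ X_ne_zero)
  simpa using congrArg (coeff 0) h0

end stationarySubalgebra

/-- Soublin's example over an arbitrary field: if `A` is the algebra of eventually constant
sequences in `k ^ ℕ`, then the power series ring `A[[x]]` is not coherent: it possesses a
finitely generated ideal which is not finitely presented as an `A[[x]]`-module. -/
theorem powerSeries_stationarySubalgebra_not_coherent (k : Type u) [Field k] :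
    ∃ I : Ideal (PowerSeries (stationarySubalgebra k)),
      I.FG ∧ ¬ Module.FinitePresentation (PowerSeries (stationarySubalgebra k)) I := by
  open stationarySubalgebra in
    refine ⟨Ideal.span {soublinSeries k}, ⟨{soublinSeries k}, by simp⟩, fun hfp => ?_⟩
    have hann : ∀ c, c ∈ (Ideal.span {soublinSeries k}).annihilator ↔ c * soublinSeries k = 0 :=
      fun c => Submodule.mem_annihilator_span_singleton _ c
    obtain ⟨N, hN⟩ := eventually_atTop.1 <|
      Submodule.FG.eventually_le (Submodule.fg_annihilator_of_finitePresentation_span_singleton hfp)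
        (P := fun j => RingHom.ker ((eval k j).comp constantCoeff))
        fun c hc => eventually_eval_constantCoeff_eq_zero ((hann c).1 hc)
    have hmem := hN (2 * N + 1) (by omega)
      ((hann _).2 (C_single_mul_soublinSeries (odd_two_mul_add_one N)))
    simp at hmem
end

section
/- Let k be a commutative ring and C a small k-linear category having both finite limits and finite colimits. If the category Lex(C) of k-linear left exact functors C^op ⥤ Mod k is abelian, then C is abelian. -/
/-!
The functor `C ⥤ Lex(C)`, `c ↦ Hom(-, c)`, is fully faithful and preserves kernels, since
representables are left exact and `Lex(C)` is a full subcategory of the presheaves. It also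
preserves cokernels: for `F` left exact, `F(coker f) → F(Y) → F(X)` is a kernel, so by the Yoneda
lemma a morphism `Hom(-, coker f) ⟶ F` is the same as a morphism `Hom(-, Y) ⟶ F` killed by
`Hom(-, f)`. A fully faithful functor into an abelian category preserving kernels and cokernels
carries coimage-image comparisons to coimage-image comparisons and reflects isomorphisms, so `C`
is abelian.
-/

open CategoryTheory Limits Opposite

universe u

namespace DelignePaper

variable (k : Type u) [CommRing k]

/-- A presheaf `Cᵒᵖ ⥤ ModuleCat k` is `k`-linear (it acts `k`-linearly on hom-modules). -/
def IsLinearPresheaf {C : Type u} [Category.{u} C] [Preadditive C] [Linear k C]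
    (F : Cᵒᵖ ⥤ ModuleCat.{u} k) : Prop :=
  (∀ {c c' : C} (f g : c ⟶ c'), F.map (f + g).op = F.map f.op + F.map g.op) ∧
  (∀ {c c' : C} (r : k) (f : c ⟶ c'), F.map (r • f).op = r • F.map f.op)

/-- The category `Lex(C)` of `k`-linear left exact functors `Cᵒᵖ ⥤ ModuleCat k`. -/
def LexPresheafCat (C : Type u) [Category.{u} C] [Preadditive C] [Linear k C] :
    Type (u+1) :=
  ObjectProperty.FullSubcategory
    (fun F : Cᵒᵖ ⥤ ModuleCat.{u} k => IsLinearPresheaf k F ∧ PreservesFiniteLimits F)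

instance (C : Type u) [Category.{u} C] [Preadditive C] [Linear k C] :
    Category.{u} (LexPresheafCat k C) := ObjectProperty.FullSubcategory.category _

end DelignePaper

open DelignePaper

noncomputable section

namespace DelignePaper

section Transfer

universe v₁ v₂ u₁ u₂

variable {A : Type u₁} [Category.{v₁} A] {D : Type u₂} [Category.{v₂} D] [Abelian D]

theorem isIso_coimageImageComparison_of_full_of_faithful [HasZeroMorphisms A] [HasKernels A]
    [HasCokernels A] (F : A ⥤ D) [F.Full] [F.Faithful]
    [∀ {X Y : A} (f : X ⟶ Y), PreservesLimit (parallelPair f 0) F]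
    [∀ {X Y : A} (f : X ⟶ Y), PreservesColimit (parallelPair f 0) F] {X Y : A} (f : X ⟶ Y) :
    IsIso (Abelian.coimageImageComparison f) :=
  have := IsIso.of_isIso_fac_right (Abelian.PreservesCoimage.hom_coimageImageComparison F f).symm
  isIso_of_fully_faithful F _

abbrev abelianOfFullOfFaithful [Preadditive A] [HasFiniteProducts A] [HasKernels A]
    [HasCokernels A] (F : A ⥤ D) [F.Full] [F.Faithful]
    [∀ {X Y : A} (f : X ⟶ Y), PreservesLimit (parallelPair f 0) F]
    [∀ {X Y : A} (f : X ⟶ Y), PreservesColimit (parallelPair f 0) F] : Abelian A :=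
  have : ∀ {X Y : A} (f : X ⟶ Y), IsIso (Abelian.coimageImageComparison f) :=
    isIso_coimageImageComparison_of_full_of_faithful F
  Abelian.ofCoimageImageComparisonIsIso

end Transfer

theorem exists_unique_map_cokernel_π_op_eq {R : Type*} [Ring R] {C : Type*} [Category C]
    [HasZeroMorphisms C] {F : Cᵒᵖ ⥤ ModuleCat R} [F.PreservesZeroMorphisms]
    [PreservesFiniteLimits F] {X Y : C} (f : X ⟶ Y) [HasCokernel f] (u : F.obj (op Y))
    (hu : F.map f.op u = 0) : ∃! v, F.map (cokernel.π f).op v = u := by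
  let S := ShortComplex.mk (F.map (cokernel.π f).op) (F.map f.op)
    (by rw [← F.map_comp, ← op_comp, cokernel.condition, op_zero, F.map_zero])
  have hS : IsLimit (KernelFork.ofι S.f S.zero) :=
    KernelFork.mapIsLimit _
      (CokernelCofork.IsColimit.ofπOp _ (cokernel.condition f) (cokernelIsCokernel f)) F
  have hinj : Function.Injective S.f :=
    (ModuleCat.mono_iff_injective _).1 (mono_of_isLimit_fork hS)
  obtain ⟨v, hv⟩ := (ShortComplex.moduleCat_exact_iff S).1 (S.exact_of_f_is_kernel hS) u hu
  exact ⟨v, hv, fun v' hv' => hinj (hv'.trans hv.symm)⟩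

section LinearYoneda

universe w v u'

variable (R : Type w) [Ring R]

instance preservesLimits_linearCoyoneda_obj (C : Type u') [Category.{v} C] [Preadditive C]
    [Linear R C] (x : Cᵒᵖ) :
    PreservesLimits ((linearCoyoneda R C).obj x) :=
  have : PreservesLimits ((linearCoyoneda R C).obj x ⋙ forget _) :=
    inferInstanceAs (PreservesLimits (coyoneda.obj x))
  preservesLimits_of_reflects_of_preserves _ (forget _)

instance preservesLimits_linearYoneda_obj (C : Type u') [Category.{v} C] [Preadditive C]
    [Linear R C] (c : C) :
    PreservesLimits ((linearYoneda R C).obj c) :=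
  have : PreservesLimits ((linearYoneda R C).obj c ⋙ forget _) :=
    inferInstanceAs (PreservesLimits (yoneda.obj c))
  preservesLimits_of_reflects_of_preserves _ (forget _)

instance preservesLimits_linearYoneda (C : Type v) [SmallCategory C] [Preadditive C]
    [Linear R C] : PreservesLimits (linearYoneda R C) :=
  preservesLimits_of_evaluation _ fun x =>
    inferInstanceAs (PreservesLimits ((linearCoyoneda R C).obj x))

end LinearYoneda

section LexYoneda

variable (k : Type u) [CommRing k] (C : Type u) [Category.{u} C] [Preadditive C] [Linear k C]

theorem isLinearPresheaf_linearYoneda_obj (c : C) :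
    IsLinearPresheaf k ((linearYoneda k C).obj c) :=
  ⟨fun f g => by ext; exact Preadditive.add_comp _ _ _ _ _ _,
    fun r f => by ext; exact Linear.smul_comp _ _ _ _ _ _⟩

def lexYoneda : C ⥤ LexPresheafCat k C :=
  ObjectProperty.lift _ (linearYoneda k C) fun c =>
    ⟨isLinearPresheaf_linearYoneda_obj k C c, inferInstance⟩

def LexPresheafCat.ι : LexPresheafCat k C ⥤ Cᵒᵖ ⥤ ModuleCat.{u} k := ObjectProperty.ι _

def LexPresheafCat.fullyFaithfulι : (LexPresheafCat.ι k C).FullyFaithful :=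
  ObjectProperty.fullyFaithfulι _

instance : (LexPresheafCat.ι k C).Full := (LexPresheafCat.fullyFaithfulι k C).full
instance : (LexPresheafCat.ι k C).Faithful := (LexPresheafCat.fullyFaithfulι k C).faithful

def fullyFaithfulLexYoneda : (lexYoneda k C).FullyFaithful :=
  .ofCompFaithful (G := LexPresheafCat.ι k C) (.ofFullyFaithful (linearYoneda k C))

instance : (lexYoneda k C).Full := (fullyFaithfulLexYoneda k C).full
instance : (lexYoneda k C).Faithful := (fullyFaithfulLexYoneda k C).faithful

instance preservesLimits_lexYoneda : PreservesLimits (lexYoneda k C) :=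
  have : PreservesLimits (lexYoneda k C ⋙ LexPresheafCat.ι k C) :=
    inferInstanceAs (PreservesLimits (linearYoneda k C))
  preservesLimits_of_reflects_of_preserves _ (LexPresheafCat.ι k C)

variable {k C}

theorem IsLinearPresheaf.additive {F : Cᵒᵖ ⥤ ModuleCat.{u} k} (hF : IsLinearPresheaf k F) :
    F.Additive :=
  ⟨fun {_ _} φ ψ => hF.1 φ.unop ψ.unop⟩

theorem lexYoneda_hom_app_apply {c : C} {F : LexPresheafCat k C}
    (g : (lexYoneda k C).obj c ⟶ F) (x : Cᵒᵖ) (h : x.unop ⟶ c) :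
    g.hom.app x h = F.obj.map h.op (g.hom.app (op c) (𝟙 c)) := by
  have := ConcreteCategory.congr_hom (g.hom.naturality h.op) (𝟙 c)
  change g.hom.app x (h ≫ 𝟙 c) = _ at this
  rwa [Category.comp_id] at this

def lexYonedaEquiv {c : C} {F : LexPresheafCat k C} :
    ((lexYoneda k C).obj c ⟶ F) ≃ F.obj.obj (op c) where
  toFun g := g.hom.app (op c) (𝟙 c)
  invFun u := ObjectProperty.homMk
    { app x := ModuleCat.ofHom
        { toFun h := F.obj.map h.op u
          map_add' h h' := by simp only [F.property.1.1 h h']; rfl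
          map_smul' r h := by simp only [F.property.1.2 r h]; rfl }
      naturality x x' φ := by
        ext h
        exact congrArg (fun m => m.hom u) (F.obj.map_comp h.op φ) }
  left_inv g := by
    refine ObjectProperty.hom_ext _ ?_
    ext x (h : x.unop ⟶ c)
    exact (lexYoneda_hom_app_apply g x h).symm
  right_inv u := by
    change F.obj.map (𝟙 c).op u = u
    simp

theorem lexYonedaEquiv_comp {c c' : C} {F : LexPresheafCat k C} (e : c' ⟶ c)
    (g : (lexYoneda k C).obj c ⟶ F) :
    lexYonedaEquiv ((lexYoneda k C).map e ≫ g) = F.obj.map e.op (lexYonedaEquiv g) := by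
  change g.hom.app (op c') (𝟙 c' ≫ e) = _
  rw [Category.id_comp]
  exact lexYoneda_hom_app_apply g (op c') e

theorem lexYonedaEquiv_zero [HasZeroMorphisms (LexPresheafCat k C)] {c : C}
    {F : LexPresheafCat k C} : lexYonedaEquiv (0 : (lexYoneda k C).obj c ⟶ F) = 0 := by
  -- `ι` is full, so it preserves zero morphisms, whatever those of `Lex(C)` are.
  change ((LexPresheafCat.ι k C).map (0 : (lexYoneda k C).obj c ⟶ F)).app (op c) (𝟙 c) = 0
  rw [Functor.map_zero]
  rfl

instance preservesCokernel_lexYoneda [HasZeroMorphisms (LexPresheafCat k C)] {X Y : C}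
    (f : X ⟶ Y) [HasCokernel f] : PreservesColimit (parallelPair f 0) (lexYoneda k C) := by
  refine preservesColimit_of_preserves_colimit_cocone (cokernelIsCokernel f)
    ((isColimitMapCoconeCoforkEquiv' (lexYoneda k C) (cokernel.condition f)).symm ?_)
  have lift : ∀ {F : LexPresheafCat k C} (g : (lexYoneda k C).obj Y ⟶ F),
      (lexYoneda k C).map f ≫ g = 0 →
        ∃! v, F.obj.map (cokernel.π f).op v = lexYonedaEquiv g := fun {F} g hg =>
    have := F.property.1.additive
    have := F.property.2
    exists_unique_map_cokernel_π_op_eq f _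
      (by rw [← lexYonedaEquiv_comp, hg, lexYonedaEquiv_zero])
  refine CokernelCofork.IsColimit.ofπ _ _ (fun g hg => lexYonedaEquiv.symm (lift g hg).choose)
    (fun g hg => lexYonedaEquiv.injective ?_) (fun g hg m hm => lexYonedaEquiv.injective ?_)
  · rw [lexYonedaEquiv_comp, Equiv.apply_symm_apply, (lift g hg).choose_spec.1]
  · rw [Equiv.apply_symm_apply]
    exact (lift g hg).choose_spec.2 _ ((lexYonedaEquiv_comp _ _).symm.trans (by rw [hm]))

end LexYoneda

end DelignePaper

end

/-- If `C` is a small `k`-linear category with finite limits and finite colimits such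
that the category `Lex(C)` of `k`-linear left exact functors `Cᵒᵖ ⥤ ModuleCat k` is
abelian, then `C` itself is abelian. -/
theorem abelian_of_lexPresheafCat_abelian (k : Type u) [CommRing k]
    (C : Type u) [Category.{u} C] [Preadditive C] [Linear k C]
    [HasFiniteLimits C] [HasFiniteColimits C]
    (h : Nonempty (Abelian (LexPresheafCat k C))) :
    Nonempty (Abelian C) :=
  let ⟨_⟩ := h
  ⟨abelianOfFullOfFaithful (lexYoneda k C)⟩
end
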